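/- Let H(q) = ∑_{σ ∈ {-1,1}^k} e^{q(σ·σ₀)²} with derivative H'. Then for all q ≥ 0, k ≤ H'(q)/H(q) ≤ k², and moreover lim_{q→∞} H'(q)/H(q) = k². -/

import Mathlib

open Finset Real

/-- The real sign of a Boolean spin: `true ↦ 1`, `false ↦ -1`. -/
noncomputable def sgn (b : Bool) : ℝ := if b then 1 else -1

/-- Standard inner product of two spin vectors in `{-1,1}^k`. -/
noncomputable def sdot {k : ℕ} (σ τ : Fin k → Bool) : ℝ := ∑ i, sgn (σ i) * sgn (τ i)

/-!
`H' q / H q` is the mean of `D σ = (σ·σ₀)²` under the Gibbs weights `exp (q D σ)`. It is at most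
`max D = k²`; for `q ≥ 0` the weights increase with `D`, so by Chebyshev's sum inequality it is at
least the uniform mean of `D`, which is `k` because distinct coordinates of a uniform spin are
uncorrelated. As `q → ∞` the weights concentrate on the maximisers of `D`, such as `σ₀`.
-/

section GibbsMean

variable {ι : Type*} [Fintype ι] (f : ι → ℝ)

noncomputable def gibbsMean (q : ℝ) : ℝ :=
  (∑ i, f i * exp (q * f i)) / ∑ i, exp (q * f i)

variable {f}

lemma sum_exp_mul_pos [Nonempty ι] (q : ℝ) : 0 < ∑ i, exp (q * f i) :=
  Finset.sum_pos (fun _ _ => exp_pos _) univ_nonempty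

lemma gibbsMean_le [Nonempty ι] {M : ℝ} (hf : ∀ i, f i ≤ M) (q : ℝ) : gibbsMean f q ≤ M := by
  rw [gibbsMean, div_le_iff₀ (sum_exp_mul_pos q), mul_sum]
  exact sum_le_sum fun i _ => mul_le_mul_of_nonneg_right (hf i) (exp_pos _).le

lemma mean_le_gibbsMean [Nonempty ι] {q : ℝ} (hq : 0 ≤ q) :
    (∑ i, f i) / Fintype.card ι ≤ gibbsMean f q := by
  have hmono : Monovary (fun i => exp (q * f i)) f :=
    (monovary_self f).comp_monotone_left (exp_monotone.comp (monotone_id.const_mul hq))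
  have hcheb := hmono.sum_mul_sum_le_card_mul_sum
  rw [gibbsMean, div_le_div_iff₀ (by positivity) (sum_exp_mul_pos q)]
  simp only [mul_comm (exp _)] at hcheb
  linarith

lemma sub_gibbsMean_le {M : ℝ} (hf : ∀ i, f i ≤ M) {i₀ : ι} (hi₀ : f i₀ = M) (q : ℝ) :
    M - gibbsMean f q ≤ ∑ i, (M - f i) * exp (-(q * (M - f i))) := by
  have : Nonempty ι := ⟨i₀⟩
  have hH := sum_exp_mul_pos (f := f) q
  have hgap : M - gibbsMean f q = (∑ i, (M - f i) * exp (q * f i)) / ∑ i, exp (q * f i) := by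
    rw [gibbsMean, eq_div_iff hH.ne', sub_mul, div_mul_cancel₀ _ hH.ne', mul_sum,
      ← sum_sub_distrib]
    simp only [sub_mul]
  have hterm : ∀ i, (M - f i) * exp (-(q * (M - f i))) = (M - f i) * exp (q * f i) / exp (q * M) :=
    fun i => by rw [mul_div_assoc, ← exp_sub]; ring_nf
  have hpeak : exp (q * M) ≤ ∑ i, exp (q * f i) := by
    simpa [hi₀] using single_le_sum (fun i _ => (exp_pos (q * f i)).le) (mem_univ i₀)
  rw [hgap, sum_congr rfl fun i _ => hterm i, ← sum_div]
  exact div_le_div_of_nonneg_left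
    (sum_nonneg fun i _ => mul_nonneg (sub_nonneg.2 (hf i)) (exp_pos _).le) (exp_pos _) hpeak

lemma tendsto_mul_exp_neg_mul_atTop {c : ℝ} (hc : 0 ≤ c) :
    Filter.Tendsto (fun q => c * exp (-(q * c))) Filter.atTop (nhds 0) := by
  rcases hc.eq_or_lt with rfl | hc
  · simp
  · simpa using (tendsto_exp_neg_atTop_nhds_zero.comp
      (Filter.tendsto_id.atTop_mul_const hc)).const_mul c

lemma tendsto_gibbsMean_atTop {M : ℝ} (hf : ∀ i, f i ≤ M) {i₀ : ι} (hi₀ : f i₀ = M) :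
    Filter.Tendsto (gibbsMean f) Filter.atTop (nhds M) := by
  have : Nonempty ι := ⟨i₀⟩
  have hgap : Filter.Tendsto (fun q => M - gibbsMean f q) Filter.atTop (nhds 0) := by
    refine squeeze_zero (fun q => sub_nonneg.2 (gibbsMean_le hf q)) (sub_gibbsMean_le hf hi₀) ?_
    simpa using tendsto_finsetSum univ fun i _ =>
      tendsto_mul_exp_neg_mul_atTop (sub_nonneg.2 (hf i))
  simpa using hgap.const_sub M

end GibbsMean

section Spins

variable {k : ℕ}

lemma sgn_mul_self (b : Bool) : sgn b * sgn b = 1 := by cases b <;> simp [sgn]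

lemma abs_sgn (b : Bool) : |sgn b| = 1 := by cases b <;> simp [sgn]

lemma sgn_not (b : Bool) : sgn (!b) = -sgn b := by cases b <;> simp [sgn]

lemma sdot_self (σ : Fin k → Bool) : sdot σ σ = k := by
  simp [sdot, sgn_mul_self]

lemma sq_sdot_le (σ τ : Fin k → Bool) : sdot σ τ ^ 2 ≤ (k : ℝ) ^ 2 := by
  have habs : |sdot σ τ| ≤ k :=
    calc |sdot σ τ| ≤ ∑ i, |sgn (σ i) * sgn (τ i)| := abs_sum_le_sum_abs _ _
      _ = k := by simp [abs_mul, abs_sgn]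
  exact sq_le_sq' (abs_le.1 habs).1 (abs_le.1 habs).2

lemma sum_sgn_mul_sgn (i j : Fin k) :
    ∑ σ : Fin k → Bool, sgn (σ i) * sgn (σ j) = if i = j then 2 ^ k else 0 := by
  split_ifs with hij
  · simp [hij, sgn_mul_self]
  · -- flipping spin `i` negates every term
    have hflip : Function.Involutive fun σ : Fin k → Bool => Function.update σ i (!σ i) :=
      fun σ => by simp
    have hneg := Fintype.sum_equiv hflip.toPerm (fun σ => sgn (σ i) * sgn (σ j))
      (fun σ => -(sgn (σ i) * sgn (σ j)))
      (fun σ => by simp [Function.update_of_ne (Ne.symm hij), sgn_not])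
    rw [sum_neg_distrib] at hneg
    linarith

lemma sum_sq_sdot (τ : Fin k → Bool) :
    ∑ σ : Fin k → Bool, sdot σ τ ^ 2 = k * 2 ^ k := by
  calc ∑ σ : Fin k → Bool, sdot σ τ ^ 2
      = ∑ σ : Fin k → Bool, ∑ i, ∑ j, sgn (τ i) * sgn (τ j) * (sgn (σ i) * sgn (σ j)) :=
        sum_congr rfl fun σ _ => by
          rw [sdot, sq, sum_mul_sum]
          exact sum_congr rfl fun i _ => sum_congr rfl fun j _ => by ring
    _ = ∑ i, ∑ j, sgn (τ i) * sgn (τ j) * ∑ σ : Fin k → Bool, sgn (σ i) * sgn (σ j) := by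
        simp only [mul_sum]
        rw [sum_comm]
        exact sum_congr rfl fun i _ => sum_comm
    _ = k * 2 ^ k := by simp [sum_sgn_mul_sgn, sgn_mul_self]

end Spins

theorem stmt13_general (k : ℕ) (σ₀ : Fin k → Bool)
    (H H' : ℝ → ℝ)
    (hH : ∀ q, H q = ∑ σ : Fin k → Bool, Real.exp (q * (sdot σ σ₀) ^ 2))
    (hH' : ∀ q, H' q = ∑ σ : Fin k → Bool, (sdot σ σ₀) ^ 2 * Real.exp (q * (sdot σ σ₀) ^ 2)) :
    (∀ q : ℝ, 0 ≤ q → (k : ℝ) ≤ H' q / H q ∧ H' q / H q ≤ (k : ℝ) ^ 2) ∧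
      Filter.Tendsto (fun q => H' q / H q) Filter.atTop (nhds ((k : ℝ) ^ 2)) := by
  set D : (Fin k → Bool) → ℝ := fun σ => sdot σ σ₀ ^ 2
  have hgibbs : ∀ q, H' q / H q = gibbsMean D q := fun q => by
    simp only [hH, hH', gibbsMean, D]
  have hmean : (∑ σ, D σ) / Fintype.card (Fin k → Bool) = k := by
    simp [D, sum_sq_sdot]
  have hmax : D σ₀ = (k : ℝ) ^ 2 := by simp [D, sdot_self]
  simp only [hgibbs]
  exact ⟨fun q hq => ⟨hmean ▸ mean_le_gibbsMean hq, gibbsMean_le (sq_sdot_le · σ₀) q⟩,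
    tendsto_gibbsMean_atTop (sq_sdot_le · σ₀) hmax⟩

theorem stmt13 (k : ℕ) (hk : 2 ≤ k) (σ₀ : Fin k → Bool)
    (H H' : ℝ → ℝ)
    (hH : ∀ q, H q = ∑ σ : Fin k → Bool, Real.exp (q * (sdot σ σ₀) ^ 2))
    (hH' : ∀ q, H' q = ∑ σ : Fin k → Bool, (sdot σ σ₀) ^ 2 * Real.exp (q * (sdot σ σ₀) ^ 2)) :
    (∀ q : ℝ, 0 ≤ q → (k : ℝ) ≤ H' q / H q ∧ H' q / H q ≤ (k : ℝ) ^ 2) ∧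
      Filter.Tendsto (fun q => H' q / H q) Filter.atTop (nhds ((k : ℝ) ^ 2)) :=
  stmt13_general k σ₀ H H' hH hH'
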